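/- Let S = [[1,0],[1,1]] and T_λ = [[1,2λ],[0,1]] in SL(2,ℂ) and let f(z) = −2z². If λ ∈ ℂ and f^[n](λ) ∈ {i, −i} for some integer n ≥ 1, then the group G_λ generated by S and T_λ is not free on its generators (some nontrivial word in the free group on two generators evaluates at (S,T_λ) to ±I), and G_λ contains a subgroup isomorphic to ℤ × ℤ (there is an injective group homomorphism from ℤ × ℤ into G_λ). -/

import Mathlib

/-!
Write `f z = -2 z²`, `L c = [[1,0],[c,1]]` (so `S = L 1`), and `a`, `b` for the free generators.
For `λ ≠ 0` one has `T_λ S T_λ⁻¹ = L(1/(2λ)) T_{f λ} L(1/(2λ))⁻¹`, and `L(1/(2λ))` commutes with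
`S`. Hence, after the substitution `b ↦ b a b⁻¹`, the value of a word at `(S, T_λ)` is a
lower-unipotent conjugate of the value of the original word at `(S, T_{f λ})`; iterating `n - 1`
times reduces the problem to `μ = f^[n-1] λ`, a root of `4μ⁴ + 1`. At such a `μ` the word
`b a⁻¹ b⁻¹ a b⁻¹ a⁻¹ b` (or its image under `b ↦ b⁻¹`) evaluates to `-L c` with `c ∉ ℝ`. The
pulled-back word `U` therefore evaluates at `(S, T_λ)` to an element commuting with `S`, so
`⁅U, a⁆` is a relation, and `S = L 1` together with `U(S, T_λ)² = L (2c)` spans a copy of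
`ℤ × ℤ`. The relation is nontrivial because at `λ = 1` all iterates of `f` are real and nonzero,
and there the seven-letter word does not commute with `S`.
-/

noncomputable section

abbrev SL2 := Matrix.SpecialLinearGroup (Fin 2) ℂ

def S : SL2 := ⟨!![1, 0; 1, 1], by norm_num [Matrix.det_fin_two_of]⟩

def T (lam : ℂ) : SL2 := ⟨!![1, 2 * lam; 0, 1], by norm_num [Matrix.det_fin_two_of]⟩

/-- The evaluation of a word in the free group on two generators at a pair `(a, b)`. -/
def evalWord (w : FreeGroup (Fin 2)) (a b : SL2) : SL2 :=
  FreeGroup.lift (fun i : Fin 2 => if i = 0 then a else b) w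

/-- Some nontrivial word in the free group on two generators evaluates at `(a, b)`
to `I` or `-I` in `SL(2, ℂ)`. -/
def HasRelation (a b : SL2) : Prop :=
  ∃ w : FreeGroup (Fin 2), w ≠ 1 ∧
    (((evalWord w a b : SL2) : Matrix (Fin 2) (Fin 2) ℂ) = 1 ∨
     ((evalWord w a b : SL2) : Matrix (Fin 2) (Fin 2) ℂ) = -1)


section evalWord

open FreeGroup
open scoped commutatorElement

variable (a b : SL2)

@[simp] lemma evalWord_of_zero : evalWord (of 0) a b = a := lift_apply_of

@[simp] lemma evalWord_of_one : evalWord (of 1) a b = b := lift_apply_of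

@[simp] lemma evalWord_mul (v w : FreeGroup (Fin 2)) :
    evalWord (v * w) a b = evalWord v a b * evalWord w a b := map_mul _ _ _

@[simp] lemma evalWord_inv (w : FreeGroup (Fin 2)) : evalWord w⁻¹ a b = (evalWord w a b)⁻¹ :=
  map_inv _ _

lemma evalWord_commutatorElement (v w : FreeGroup (Fin 2)) :
    evalWord ⁅v, w⁆ a b = ⁅evalWord v a b, evalWord w a b⁆ :=
  map_commutatorElement _ _ _

lemma Commute.evalWord {v w : FreeGroup (Fin 2)} (h : Commute v w) :
    Commute (evalWord v a b) (evalWord w a b) :=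
  h.map _

lemma evalWord_map {F : Type*} [FunLike F SL2 SL2] [MonoidHomClass F SL2 SL2] (φ : F)
    (w : FreeGroup (Fin 2)) :
    evalWord w (φ a) (φ b) = φ (evalWord w a b) := by
  change lift _ w = ((φ : SL2 →* SL2).comp (lift _)) w
  congr 1
  refine ext_hom _ _ fun i => ?_
  fin_cases i <;> simp

lemma evalWord_lift (ψ : Fin 2 → FreeGroup (Fin 2)) (w : FreeGroup (Fin 2)) :
    evalWord (lift ψ w) a b = evalWord w (evalWord (ψ 0) a b) (evalWord (ψ 1) a b) := by
  change ((lift _).comp (lift ψ)) w = lift _ w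
  congr 1
  refine ext_hom _ _ fun i => ?_
  fin_cases i <;> simp [evalWord]

lemma evalWord_mem_closure (w : FreeGroup (Fin 2)) :
    evalWord w a b ∈ Subgroup.closure {a, b} := by
  have hrange : Set.range (fun i : Fin 2 => if i = 0 then a else b) = {a, b} := by
    ext g
    simp [Fin.exists_fin_two, eq_comm]
  rw [← hrange, ← range_lift_eq_closure]
  exact ⟨w, rfl⟩

end evalWord

open Matrix.SpecialLinearGroup in
def lowerUnipotent (c : ℂ) : SL2 := transvection (show (1 : Fin 2) ≠ 0 by decide) c

lemma coe_lowerUnipotent (c : ℂ) :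
    (lowerUnipotent c : Matrix (Fin 2) (Fin 2) ℂ) = !![1, 0; c, 1] := by
  ext i j
  fin_cases i <;> fin_cases j <;>
    simp [lowerUnipotent, Matrix.SpecialLinearGroup.transvection_coe]

lemma lowerUnipotent_add (c d : ℂ) :
    lowerUnipotent (c + d) = lowerUnipotent c * lowerUnipotent d :=
  Matrix.SpecialLinearGroup.transvection_add _ _ _

lemma lowerUnipotent_neg (c : ℂ) : lowerUnipotent (-c) = (lowerUnipotent c)⁻¹ :=
  (Matrix.SpecialLinearGroup.transvection_inv _ _).symm

lemma lowerUnipotent_injective : Function.Injective lowerUnipotent := fun c d h => by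
  simpa [coe_lowerUnipotent] using congr_arg (fun g : SL2 => (g : Matrix (Fin 2) (Fin 2) ℂ) 1 0) h

lemma commute_lowerUnipotent (c d : ℂ) : Commute (lowerUnipotent c) (lowerUnipotent d) := by
  rw [Commute, SemiconjBy, ← lowerUnipotent_add, ← lowerUnipotent_add, add_comm]

def lowerUnipotentHom : Multiplicative ℂ →* SL2 :=
  MonoidHom.mk' (fun c => lowerUnipotent c.toAdd) fun _ _ => lowerUnipotent_add _ _

lemma lowerUnipotent_zsmul (n : ℤ) (c : ℂ) : lowerUnipotent (n • c) = lowerUnipotent c ^ n :=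
  map_zpow lowerUnipotentHom (Multiplicative.ofAdd c) n

lemma S_eq_lowerUnipotent : S = lowerUnipotent 1 :=
  Subtype.ext (coe_lowerUnipotent 1).symm

lemma T_neg (lam : ℂ) : T (-lam) = (T lam)⁻¹ := by
  rw [eq_inv_iff_mul_eq_one]
  apply Subtype.ext
  simp only [Matrix.SpecialLinearGroup.coe_mul, Matrix.SpecialLinearGroup.coe_one]
  simp [T, Matrix.one_fin_two]

def quadMap (z : ℂ) : ℂ := -2 * z ^ 2

lemma T_mul_S_mul_T_inv {lam : ℂ} (hlam : lam ≠ 0) :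
    T lam * S * (T lam)⁻¹ = MulAut.conj (lowerUnipotent (2 * lam)⁻¹) (T (quadMap lam)) := by
  rw [MulAut.conj_apply, ← T_neg, ← lowerUnipotent_neg]
  apply Subtype.ext
  simp only [Matrix.SpecialLinearGroup.coe_mul, coe_lowerUnipotent]
  simp only [T, S, quadMap, Matrix.mul_fin_two]
  ext i j
  fin_cases i <;> fin_cases j <;> simp <;> field_simp <;> ring

lemma conj_lowerUnipotent_S (c : ℂ) : MulAut.conj (lowerUnipotent c) S = S := by
  rw [MulAut.conj_apply, S_eq_lowerUnipotent, (commute_lowerUnipotent c 1).mul_inv_cancel]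

lemma quadMap_iterate_eq_zero_iff (k : ℕ) {z : ℂ} : quadMap^[k] z = 0 ↔ z = 0 := by
  induction k generalizing z with
  | zero => rfl
  | succ k ih => simp [Function.iterate_succ_apply', ih, quadMap]

lemma quadMap_iterate_ofReal (k : ℕ) (x : ℝ) : ∃ t : ℝ, quadMap^[k] x = t := by
  have hmaps : Set.MapsTo quadMap (Set.range Complex.ofReal) (Set.range Complex.ofReal) := by
    rintro _ ⟨t, rfl⟩
    exact ⟨-2 * t ^ 2, by push_cast [quadMap]; ring⟩
  exact (hmaps.iterate k ⟨x, rfl⟩).imp fun _ ht => ht.symm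

open FreeGroup in
def conjSubst : FreeGroup (Fin 2) →* FreeGroup (Fin 2) := lift ![of 0, of 1 * of 0 * (of 1)⁻¹]

lemma evalWord_conjSubst {lam : ℂ} (hlam : lam ≠ 0) (w : FreeGroup (Fin 2)) :
    evalWord (conjSubst w) S (T lam) =
      MulAut.conj (lowerUnipotent (2 * lam)⁻¹) (evalWord w S (T (quadMap lam))) := by
  simp only [conjSubst, evalWord_lift, Matrix.cons_val_zero, Matrix.cons_val_one,
    evalWord_of_zero, evalWord_mul, evalWord_of_one, evalWord_inv]
  rw [T_mul_S_mul_T_inv hlam]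
  conv_lhs => rw [← conj_lowerUnipotent_S (2 * lam)⁻¹]
  exact evalWord_map _ _ _ w

lemma exists_evalWord_conjSubst_iterate {lam : ℂ} (hlam : lam ≠ 0) (k : ℕ)
    (w : FreeGroup (Fin 2)) :
    ∃ c : ℂ, evalWord (conjSubst^[k] w) S (T lam) =
      MulAut.conj (lowerUnipotent c) (evalWord w S (T (quadMap^[k] lam))) := by
  induction k generalizing w with
  | zero => exact ⟨0, by simp [lowerUnipotent]⟩
  | succ k ih =>
    obtain ⟨c, hc⟩ := ih (conjSubst w)
    have hk : quadMap^[k] lam ≠ 0 := (quadMap_iterate_eq_zero_iff k).not.mpr hlam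
    refine ⟨c + (2 * quadMap^[k] lam)⁻¹, ?_⟩
    rw [Function.iterate_succ_apply, hc, evalWord_conjSubst hk, lowerUnipotent_add, map_mul,
      MulAut.mul_apply, ← Function.iterate_succ_apply' quadMap]

open FreeGroup in
def baseWord : FreeGroup (Fin 2) :=
  of 1 * (of 0)⁻¹ * (of 1)⁻¹ * of 0 * (of 1)⁻¹ * (of 0)⁻¹ * of 1

open FreeGroup in
def invSubst : FreeGroup (Fin 2) →* FreeGroup (Fin 2) := lift ![of 0, (of 1)⁻¹]

lemma evalWord_invSubst (lam : ℂ) (w : FreeGroup (Fin 2)) :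
    evalWord (invSubst w) S (T lam) = evalWord w S (T (-lam)) := by
  simp [invSubst, evalWord_lift, T_neg]

lemma coe_evalWord_baseWord (μ : ℂ) :
    (evalWord baseWord S (T μ) : Matrix (Fin 2) (Fin 2) ℂ) =
      !![1 - 4 * μ ^ 2 + 8 * μ ^ 3, 8 * μ ^ 2 * (2 * μ ^ 2 - 2 * μ + 1);
         4 * μ ^ 2 - 1, 1 - 4 * μ ^ 2 + 8 * μ ^ 3] := by
  simp only [baseWord, evalWord_mul, evalWord_inv, evalWord_of_zero, evalWord_of_one, ← T_neg,
    S_eq_lowerUnipotent, ← lowerUnipotent_neg, Matrix.SpecialLinearGroup.coe_mul,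
    coe_lowerUnipotent]
  simp only [T, Matrix.mul_fin_two]
  ext i j
  fin_cases i <;> fin_cases j <;> simp <;> ring

lemma two_mul_sq_sub_two_mul_add_one_ne_zero (t : ℝ) : (2 * t ^ 2 - 2 * t + 1 : ℂ) ≠ 0 := by
  exact_mod_cast (by nlinarith [sq_nonneg (2 * t - 1)] : 2 * t ^ 2 - 2 * t + 1 ≠ (0 : ℝ))

lemma evalWord_baseWord_eq_neg_lowerUnipotent {μ : ℂ} (hμ : 2 * μ ^ 2 - 2 * μ + 1 = 0) :
    evalWord baseWord S (T μ) = -lowerUnipotent (3 - 4 * μ) := by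
  apply Subtype.ext
  rw [coe_evalWord_baseWord, Matrix.SpecialLinearGroup.coe_neg, coe_lowerUnipotent]
  ext i j
  fin_cases i <;> fin_cases j <;>
    simp only [Matrix.neg_apply, Matrix.of_apply, Matrix.cons_val', Matrix.cons_val_zero,
      Matrix.cons_val_one, Matrix.empty_val', Matrix.cons_val_fin_one, Fin.zero_eta, Fin.mk_one]
  · linear_combination (4 * μ + 2) * hμ
  · linear_combination 8 * μ ^ 2 * hμ
  · linear_combination 2 * hμ
  · linear_combination (4 * μ + 2) * hμ

lemma apply_zero_one_eq_zero_of_commute_S {g : SL2} (h : Commute g S) :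
    (g : Matrix (Fin 2) (Fin 2) ℂ) 0 1 = 0 := by
  have h00 := congr_arg (fun x : SL2 => (x : Matrix (Fin 2) (Fin 2) ℂ) 0 0) h.eq
  simp only [Matrix.SpecialLinearGroup.coe_mul, S_eq_lowerUnipotent, coe_lowerUnipotent] at h00
  simpa [Matrix.mul_apply, Fin.sum_univ_two] using h00

lemma not_commute_evalWord_baseWord_S {t : ℝ} (ht : t ≠ 0) :
    ¬Commute (evalWord baseWord S (T t)) S := fun h => by
  have h01 := apply_zero_one_eq_zero_of_commute_S h
  rw [coe_evalWord_baseWord] at h01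
  simp only [Matrix.of_apply, Matrix.cons_val', Matrix.cons_val_zero, Matrix.cons_val_one,
    Matrix.empty_val', Matrix.cons_val_fin_one] at h01
  exact mul_ne_zero (by simpa using ht) (two_mul_sq_sub_two_mul_add_one_ne_zero t) h01

lemma im_ne_zero_of_two_mul_sq_sub_two_mul_add_one_eq_zero {μ : ℂ}
    (hμ : 2 * μ ^ 2 - 2 * μ + 1 = 0) : μ.im ≠ 0 := fun h => by
  have hreal : (μ.re : ℂ) = μ := Complex.ext rfl (by simp [h])
  exact two_mul_sq_sub_two_mul_add_one_ne_zero μ.re (hreal ▸ hμ)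

lemma exists_word_evalWord_eq_neg_lowerUnipotent {μ : ℂ}
    (hμ : quadMap μ = Complex.I ∨ quadMap μ = -Complex.I) :
    ∃ u : FreeGroup (Fin 2), ∃ c : ℂ, c.im ≠ 0 ∧ evalWord u S (T μ) = -lowerUnipotent c ∧
      ∀ t : ℝ, t ≠ 0 → ¬Commute (evalWord u S (T t)) S := by
  have hfactor : (2 * μ ^ 2 - 2 * μ + 1) * (2 * (-μ) ^ 2 - 2 * (-μ) + 1) = 0 := by
    have hsq : quadMap μ ^ 2 = -1 := by rcases hμ with h | h <;> simp [h]
    unfold quadMap at hsq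
    linear_combination hsq
  rcases mul_eq_zero.mp hfactor with h | h
  · exact ⟨baseWord, 3 - 4 * μ,
      by simpa using im_ne_zero_of_two_mul_sq_sub_two_mul_add_one_eq_zero h,
      evalWord_baseWord_eq_neg_lowerUnipotent h, fun t ht => not_commute_evalWord_baseWord_S ht⟩
  · refine ⟨invSubst baseWord, 3 - 4 * -μ,
      by simpa using im_ne_zero_of_two_mul_sq_sub_two_mul_add_one_eq_zero h,
      by rw [evalWord_invSubst]; exact evalWord_baseWord_eq_neg_lowerUnipotent h, fun t ht => ?_⟩
    rw [evalWord_invSubst, ← Complex.ofReal_neg]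
    exact not_commute_evalWord_baseWord_S (neg_ne_zero.mpr ht)

open scoped commutatorElement in
lemma hasRelation_of_commute {a b : SL2} {U : FreeGroup (Fin 2)}
    (hU : ¬Commute U (FreeGroup.of 0)) (hab : Commute (evalWord U a b) a) : HasRelation a b :=
  ⟨⁅U, FreeGroup.of 0⁆, fun h => hU (commutatorElement_eq_one_iff_commute.mp h), Or.inl <| by
    rw [evalWord_commutatorElement, evalWord_of_zero, commutatorElement_eq_one_iff_commute.mpr hab,
      Matrix.SpecialLinearGroup.coe_one]⟩

-- Specialise at `λ = 1`, where every `quadMap^[k] 1` is a nonzero real number.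
lemma not_commute_conjSubst_iterate {u : FreeGroup (Fin 2)}
    (hu : ∀ t : ℝ, t ≠ 0 → ¬Commute (evalWord u S (T t)) S) (k : ℕ) :
    ¬Commute (conjSubst^[k] u) (FreeGroup.of 0) := fun h => by
  have hcomm := h.evalWord S (T 1)
  obtain ⟨c, hc⟩ := exists_evalWord_conjSubst_iterate one_ne_zero k u
  obtain ⟨t, ht⟩ := quadMap_iterate_ofReal k 1
  rw [Complex.ofReal_one] at ht
  have ht0 : t ≠ 0 := by
    rintro rfl
    exact one_ne_zero ((quadMap_iterate_eq_zero_iff k).mp (by simpa using ht))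
  rw [hc, evalWord_of_zero, ht] at hcomm
  have hconj : Commute (MulAut.conj (lowerUnipotent c) (evalWord u S (T t)))
      (MulAut.conj (lowerUnipotent c) S) := by
    rwa [conj_lowerUnipotent_S]
  exact hu t ht0 (hconj.of_map (MulEquiv.injective _))

lemma injective_intCast_add_intCast_mul {z : ℂ} (hz : z.im ≠ 0) :
    Function.Injective ((zmultiplesHom ℂ 1).coprod (zmultiplesHom ℂ z)) := by
  rw [injective_iff_map_eq_zero]
  rintro ⟨m, n⟩ h
  simp only [AddMonoidHom.coprod_apply, zmultiplesHom_apply, zsmul_eq_mul, mul_one] at h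
  have hn : n = 0 := by simpa [hz] using congr_arg Complex.im h
  subst hn
  simpa using h

lemma exists_injective_prod_int_of_lowerUnipotent_mem {H : Subgroup SL2} {z : ℂ}
    (hz : z.im ≠ 0) (h1 : lowerUnipotent 1 ∈ H) (hzH : lowerUnipotent z ∈ H) :
    ∃ φ : Multiplicative (ℤ × ℤ) →* SL2, Function.Injective φ ∧ ∀ p, φ p ∈ H := by
  refine ⟨lowerUnipotentHom.comp
    (AddMonoidHom.toMultiplicative ((zmultiplesHom ℂ 1).coprod (zmultiplesHom ℂ z))),
    lowerUnipotent_injective.comp (injective_intCast_add_intCast_mul hz), fun p => ?_⟩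
  change lowerUnipotent (p.toAdd.1 • 1 + p.toAdd.2 • z) ∈ H
  rw [lowerUnipotent_add, lowerUnipotent_zsmul, lowerUnipotent_zsmul]
  exact mul_mem (zpow_mem h1 _) (zpow_mem hzH _)

theorem preimages_of_i_nonfree_and_zxz (lam : ℂ) (n : ℕ) (hn : 1 ≤ n)
    (h : (fun z : ℂ => -2 * z ^ 2)^[n] lam = Complex.I ∨
         (fun z : ℂ => -2 * z ^ 2)^[n] lam = -Complex.I) :
    HasRelation S (T lam) ∧
    ∃ φ : Multiplicative (ℤ × ℤ) →* SL2,
      Function.Injective φ ∧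
      ∀ p : Multiplicative (ℤ × ℤ), φ p ∈ Subgroup.closure ({S, T lam} : Set SL2) := by
  obtain ⟨k, rfl⟩ := Nat.exists_eq_add_of_le' hn
  change quadMap^[k + 1] lam = Complex.I ∨ quadMap^[k + 1] lam = -Complex.I at h
  have hlam : lam ≠ 0 := by
    rintro rfl
    rcases h with h | h <;>
      simp [(quadMap_iterate_eq_zero_iff _).mpr rfl, Complex.I_ne_zero.symm] at h
  rw [Function.iterate_succ_apply'] at h
  obtain ⟨u, c, hc, hu, hreal⟩ := exists_word_evalWord_eq_neg_lowerUnipotent h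
  obtain ⟨d, hd⟩ := exists_evalWord_conjSubst_iterate hlam k u
  have hK : evalWord (conjSubst^[k] u) S (T lam) = -lowerUnipotent c := by
    rw [hd, hu, MulAut.conj_apply, ((commute_lowerUnipotent d c).neg_right).mul_inv_cancel]
  have hKmem := evalWord_mem_closure S (T lam) (conjSubst^[k] u)
  refine ⟨hasRelation_of_commute (not_commute_conjSubst_iterate hreal k) ?_,
    exists_injective_prod_int_of_lowerUnipotent_mem (z := c + c) (by simpa using hc) ?_ ?_⟩
  · rw [hK, S_eq_lowerUnipotent]
    exact (commute_lowerUnipotent c 1).neg_left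
  · exact S_eq_lowerUnipotent ▸ Subgroup.subset_closure (Set.mem_insert _ _)
  · rw [lowerUnipotent_add, ← neg_mul_neg, ← hK]
    exact mul_mem hKmem hKmem

end
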